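/- Let J be a bounded linear operator between Hilbert spaces with J ≠ 0, r a vector, and Δ > 0. The Cauchy point decrease estimate holds: min over t ∈ [0, Δ/‖J^*r‖] of m(−t J^* r) − m(0) ≤ −½ ‖J^* r‖ min{Δ, ‖J^* r‖/‖J^* J‖}, where m(s) = ½‖J s + r‖², provided J^* r ≠ 0. -/

import Mathlib

/-!
Write `g = J* r` and `B = ‖J* J‖`. Along `-t g` the model decreases by
`½ t² ‖J g‖² - t ‖g‖²`, and `‖J g‖² ≤ B ‖g‖²`. The step `t = min (Δ / ‖g‖) B⁻¹` lies in the
trust region and satisfies `t B ≤ 1`, so the quadratic term is at most half the linear one and the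
decrease is at most `-½ t ‖g‖² = -½ ‖g‖ min Δ (‖g‖ / B)`. (Lean's `0⁻¹ = 0` makes the
degenerate case `B = 0` consistent: there `t = 0` and both sides vanish.)
-/

open ContinuousLinearMap

section Quadratic

variable {t b c B : ℝ}

theorem quadratic_le_half_linear_of_mul_le_one (ht : 0 ≤ t) (hc : 0 ≤ c) (htB : t * B ≤ 1)
    (hb : b ≤ B * c) : 1 / 2 * t ^ 2 * b - t * c ≤ -(1 / 2) * t * c := by
  have : t ^ 2 * b ≤ t * c := calc
    t ^ 2 * b ≤ t ^ 2 * (B * c) := by gcongr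
    _ = t * (t * B) * c := by ring
    _ ≤ t * 1 * c := by gcongr
    _ = t * c := by ring
  linarith

theorem min_div_inv_mul_cancel {a : ℝ} (Δ : ℝ) (ha : 0 < a) :
    min (Δ / a) B⁻¹ * a = min Δ (a / B) := by
  rw [min_mul_of_nonneg _ _ ha.le, div_mul_cancel₀ _ ha.ne', inv_mul_eq_div]

theorem min_div_inv_mul_le_one {a Δ : ℝ} (hB : 0 ≤ B) : min (Δ / a) B⁻¹ * B ≤ 1 := by
  rcases hB.eq_or_lt with rfl | hB
  · simp
  · calc min (Δ / a) B⁻¹ * B ≤ B⁻¹ * B := by gcongr; exact min_le_right _ _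
      _ = 1 := inv_mul_cancel₀ hB.ne'

end Quadratic

section LeastSquares

variable {H K : Type*} [NormedAddCommGroup H] [InnerProductSpace ℝ H] [CompleteSpace H]
  [NormedAddCommGroup K] [InnerProductSpace ℝ K] [CompleteSpace K]

theorem norm_apply_sq_le_norm_adjoint_comp_self_mul (J : H →L[ℝ] K) (x : H) :
    ‖J x‖ ^ 2 ≤ ‖adjoint J ∘L J‖ * ‖x‖ ^ 2 := by
  rw [norm_adjoint_comp_self, ← sq, ← mul_pow]
  exact pow_le_pow_left₀ (norm_nonneg _) (J.le_opNorm x) 2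

theorem half_norm_sq_apply_add_sub (J : H →L[ℝ] K) (r : K) (s : H) :
    1 / 2 * ‖J s + r‖ ^ 2 - 1 / 2 * ‖r‖ ^ 2 = 1 / 2 * ‖J s‖ ^ 2 + inner ℝ (adjoint J r) s := by
  rw [norm_add_sq_real, adjoint_inner_left, real_inner_comm]
  ring

theorem half_norm_sq_apply_smul_adjoint_add_sub (J : H →L[ℝ] K) (r : K) (t : ℝ) :
    1 / 2 * ‖J (-t • adjoint J r) + r‖ ^ 2 - 1 / 2 * ‖r‖ ^ 2 =
      1 / 2 * t ^ 2 * ‖J (adjoint J r)‖ ^ 2 - t * ‖adjoint J r‖ ^ 2 := by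
  rw [half_norm_sq_apply_add_sub, map_smul, norm_smul, real_inner_smul_right,
    real_inner_self_eq_norm_sq, mul_pow, Real.norm_eq_abs, sq_abs]
  ring

end LeastSquares

theorem cauchy_point_decrease_general {H K : Type*}
    [NormedAddCommGroup H] [InnerProductSpace ℝ H] [CompleteSpace H]
    [NormedAddCommGroup K] [InnerProductSpace ℝ K] [CompleteSpace K]
    (J : H →L[ℝ] K) (r : K) (Δ : ℝ) (hΔ : 0 < Δ)
    (hJr : (ContinuousLinearMap.adjoint J) r ≠ 0)
    (m : H → ℝ) (hm : ∀ s, m s = (1 / 2) * ‖J s + r‖ ^ 2) :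
    ∃ t ∈ Set.Icc (0 : ℝ) (Δ / ‖(ContinuousLinearMap.adjoint J) r‖),
      m (-t • (ContinuousLinearMap.adjoint J) r) - m 0 ≤
        -(1 / 2) * ‖(ContinuousLinearMap.adjoint J) r‖ *
          min Δ (‖(ContinuousLinearMap.adjoint J) r‖ /
            ‖(ContinuousLinearMap.adjoint J).comp J‖) := by
  set g := adjoint J r
  set B := ‖adjoint J ∘L J‖
  have hg : 0 < ‖g‖ := norm_pos_iff.mpr hJr
  have ht : 0 ≤ min (Δ / ‖g‖) B⁻¹ := by positivity
  refine ⟨min (Δ / ‖g‖) B⁻¹, ⟨ht, min_le_left _ _⟩, ?_⟩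
  rw [hm, hm, map_zero, zero_add, half_norm_sq_apply_smul_adjoint_add_sub,
    ← min_div_inv_mul_cancel Δ hg]
  calc _ ≤ -(1 / 2) * min (Δ / ‖g‖) B⁻¹ * ‖g‖ ^ 2 :=
        quadratic_le_half_linear_of_mul_le_one ht (sq_nonneg _)
          (min_div_inv_mul_le_one (norm_nonneg _))
          (norm_apply_sq_le_norm_adjoint_comp_self_mul J g)
    _ = _ := by ring

/-- Cauchy point decrease estimate for the quadratic model `m(s) = ½‖Js + r‖²`
along the steepest-descent direction `-J* r` within a trust region of radius `Δ`. -/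
theorem cauchy_point_decrease {H K : Type*}
    [NormedAddCommGroup H] [InnerProductSpace ℝ H] [CompleteSpace H]
    [NormedAddCommGroup K] [InnerProductSpace ℝ K] [CompleteSpace K]
    (J : H →L[ℝ] K) (hJ : J ≠ 0) (r : K) (Δ : ℝ) (hΔ : 0 < Δ)
    (hJr : (ContinuousLinearMap.adjoint J) r ≠ 0)
    (m : H → ℝ) (hm : ∀ s, m s = (1 / 2) * ‖J s + r‖ ^ 2) :
    ∃ t ∈ Set.Icc (0 : ℝ) (Δ / ‖(ContinuousLinearMap.adjoint J) r‖),
      m (-t • (ContinuousLinearMap.adjoint J) r) - m 0 ≤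
        -(1 / 2) * ‖(ContinuousLinearMap.adjoint J) r‖ *
          min Δ (‖(ContinuousLinearMap.adjoint J) r‖ /
            ‖(ContinuousLinearMap.adjoint J).comp J‖) :=
  cauchy_point_decrease_general J r Δ hΔ hJr m hm
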